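/- Inclusion logic formulas are closed under unions of teams: if M ⊨_{X_i} φ for all i ∈ I, then M ⊨_{⋃_{i∈I} X_i} φ. -/

import Mathlib

namespace TeamSem

variable {M : Type}

/-- A team is a set of assignments (variables are natural numbers). -/
abbrev Team (M : Type) := Set (ℕ → M)

/-- Lax existential extension of a team `X` along variable `x` by a choice function `F`. -/
def extT (X : Team M) (x : ℕ) (F : (ℕ → M) → Set M) : Team M :=
  {t | ∃ s ∈ X, ∃ a ∈ F s, t = Function.update s x a}

/-- Universal extension of a team `X` along variable `x`. -/
def extAll (X : Team M) (x : ℕ) : Team M :=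
  {t | ∃ s ∈ X, ∃ a : M, t = Function.update s x a}

/-- First-order formulas with semantic atoms depending on a finite list of variables. -/
inductive FOForm (M : Type) where
  | atom : List ℕ → (List M → Prop) → FOForm M
  | neg  : FOForm M → FOForm M
  | and  : FOForm M → FOForm M → FOForm M
  | or   : FOForm M → FOForm M → FOForm M
  | ex   : ℕ → FOForm M → FOForm M
  | all  : ℕ → FOForm M → FOForm M

/-- Tarskian (single-assignment) satisfaction for first-order formulas. -/
def FOForm.sat : FOForm M → (ℕ → M) → Prop
  | .atom l p, s => p (l.map s)
  | .neg φ, s => ¬ FOForm.sat φ s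
  | .and φ ψ, s => FOForm.sat φ s ∧ FOForm.sat ψ s
  | .or φ ψ, s => FOForm.sat φ s ∨ FOForm.sat ψ s
  | .ex x φ, s => ∃ a : M, FOForm.sat φ (Function.update s x a)
  | .all x φ, s => ∀ a : M, FOForm.sat φ (Function.update s x a)

/-- Free variables of a first-order formula. -/
def FOForm.fv : FOForm M → Set ℕ
  | .atom l _ => {v | v ∈ l}
  | .neg φ => FOForm.fv φ
  | .and φ ψ => FOForm.fv φ ∪ FOForm.fv ψ
  | .or φ ψ => FOForm.fv φ ∪ FOForm.fv ψ
  | .ex x φ => FOForm.fv φ \ {x}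
  | .all x φ => FOForm.fv φ \ {x}

/-- Formulas of inclusion logic: first-order formulas (with negation applied
only to first-order formulas), inclusion atoms, ∧, ∨, ∃, ∀. -/
inductive IncForm (M : Type) where
  | fo   : FOForm M → IncForm M
  | incl : List ℕ → List ℕ → IncForm M
  | and  : IncForm M → IncForm M → IncForm M
  | or   : IncForm M → IncForm M → IncForm M
  | ex   : ℕ → IncForm M → IncForm M
  | all  : ℕ → IncForm M → IncForm M

/-- Lax team semantics for inclusion logic. -/
def IncForm.tsat : IncForm M → Team M → Prop
  | .fo α, X => ∀ s ∈ X, FOForm.sat α s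
  | .incl xs ys, X => ∀ s ∈ X, ∃ s' ∈ X, xs.map s = ys.map s'
  | .and φ ψ, X => IncForm.tsat φ X ∧ IncForm.tsat ψ X
  | .or φ ψ, X => ∃ Y Z : Team M, X = Y ∪ Z ∧ IncForm.tsat φ Y ∧ IncForm.tsat ψ Z
  | .ex x φ, X => ∃ F : (ℕ → M) → Set M, (∀ s ∈ X, (F s).Nonempty) ∧
      IncForm.tsat φ (extT X x F)
  | .all x φ, X => IncForm.tsat φ (extAll X x)

/-- Free variables of an inclusion logic formula. -/
def IncForm.fv : IncForm M → Set ℕ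
  | .fo α => FOForm.fv α
  | .incl xs ys => {v | v ∈ xs ∨ v ∈ ys}
  | .and φ ψ => IncForm.fv φ ∪ IncForm.fv ψ
  | .or φ ψ => IncForm.fv φ ∪ IncForm.fv ψ
  | .ex x φ => IncForm.fv φ \ {x}
  | .all x φ => IncForm.fv φ \ {x}

/-- A block of existential quantifiers. -/
def IncForm.exs (l : List ℕ) (φ : IncForm M) : IncForm M := l.foldr IncForm.ex φ

/-- A block of universal quantifiers. -/
def IncForm.alls (l : List ℕ) (φ : IncForm M) : IncForm M := l.foldr IncForm.all φ

/-!
Every clause of lax team semantics survives unions of teams. Inclusion atoms and first-order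
formulas are checked pointwise inside the team; splittings for `∨` are united componentwise;
both team extensions commute with unions; and for `∃` the choice functions of the parts are
glued by giving each assignment every witness it received in any part, which laxness permits.
-/

section

variable {ι : Type}

theorem extAll_iUnion (X : ι → Team M) (x : ℕ) :
    extAll (⋃ i, X i) x = ⋃ i, extAll (X i) x := by
  ext t
  simp only [extAll, Set.mem_iUnion, Set.mem_ofPred_eq]
  grind

def gluedChoice (X : ι → Team M) (F : ι → (ℕ → M) → Set M) (s : ℕ → M) : Set M :=
  ⋃ i, {a | s ∈ X i ∧ a ∈ F i s}

theorem gluedChoice_nonempty {X : ι → Team M} {F : ι → (ℕ → M) → Set M}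
    (hF : ∀ i, ∀ s ∈ X i, (F i s).Nonempty) : ∀ s ∈ ⋃ i, X i, (gluedChoice X F s).Nonempty := by
  intro s hs
  obtain ⟨i, hi⟩ := Set.mem_iUnion.1 hs
  obtain ⟨a, ha⟩ := hF i s hi
  exact ⟨a, Set.mem_iUnion.2 ⟨i, hi, ha⟩⟩

theorem extT_iUnion_gluedChoice (X : ι → Team M) (x : ℕ) (F : ι → (ℕ → M) → Set M) :
    extT (⋃ i, X i) x (gluedChoice X F) = ⋃ i, extT (X i) x (F i) := by
  ext t
  simp only [extT, gluedChoice, Set.mem_iUnion, Set.mem_ofPred_eq]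
  grind

end

theorem union_closure {ι : Type} (φ : IncForm M) (X : ι → Team M)
    (h : ∀ i, IncForm.tsat φ (X i)) :
    IncForm.tsat φ (⋃ i, X i) := by
  induction φ generalizing ι X with
  | fo α =>
    intro s hs
    obtain ⟨i, hi⟩ := Set.mem_iUnion.1 hs
    exact h i s hi
  | incl xs ys =>
    intro s hs
    obtain ⟨i, hi⟩ := Set.mem_iUnion.1 hs
    obtain ⟨s', hs', heq⟩ := h i s hi
    exact ⟨s', Set.mem_iUnion.2 ⟨i, hs'⟩, heq⟩
  | and φ ψ ihφ ihψ => exact ⟨ihφ X fun i => (h i).1, ihψ X fun i => (h i).2⟩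
  | or φ ψ ihφ ihψ =>
    choose Y Z hXYZ hY hZ using h
    refine ⟨⋃ i, Y i, ⋃ i, Z i, ?_, ihφ Y hY, ihψ Z hZ⟩
    rw [← Set.iUnion_union_distrib]
    exact Set.iUnion_congr hXYZ
  | ex x φ ih =>
    choose F hF hsat using h
    refine ⟨gluedChoice X F, gluedChoice_nonempty hF, ?_⟩
    rw [extT_iUnion_gluedChoice]
    exact ih _ hsat
  | all x φ ih =>
    show IncForm.tsat φ (extAll _ x)
    rw [extAll_iUnion]
    exact ih _ h

end TeamSem
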